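/- arXiv:0810.3422 — 3 statements merged into one kernel-verified Lean document; each statement's English description precedes it below -/
import Mathlib

section
/- Fix an integer q ≥ 3. For each input length K let N = qK, and for weights 1 ≤ w ≤ K, 1 ≤ d ≤ N define E(A_{d,w}) = C(K,w) · C(d-1, ⌈qw/2⌉-1) · C(N-d, ⌊qw/2⌋) / C(N, qw) (and 0 when the binomial constraints fail). Then for any ε > 0 there exists N₀ such that for all N ≥ N₀, the cumulative sum ∑_{w=1}^{K} ∑_{d=1}^{⌊N^{(q-2)/q - ε}⌋} E(A_{d,w}) < 1. -/
/-!
Write `m = qw`, `h = ⌈m/2⌉` and `D = ⌊N^{(q-2)/q - ε}⌋`. Bounding the three binomials in the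
numerator by `K^w`, `D^{h-1}/(h-1)!`, `N^{⌊m/2⌋}/⌊m/2⌋!` and the denominator from below by
`N^m/(2^m m!)`, and using `m! ≤ 4^m (h-1)! ⌊m/2⌋!`, gives `E(A_{d,w}) ≤ 8^m K^w D^{h-1} / N^h`
for `d ≤ D`; the lower bound on `C(N,m)` needs `2m ≤ N`, which holds once `4D ≤ N` because all
terms vanish unless `h ≤ D`. Summing over `d ≤ D` yields
`8^m K^w (D/N)^h ≤ (8^q K (D/N)^{q/2})^w`, and `D/N ≤ N^{-(2/q+ε)}` makes the base at most
`8^q N^{-εq/2} ≤ 1/2` for large `N`, so the double sum is below `∑_{w ≥ 1} 2^{-w} = 1`.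
-/

open Finset in
/-- Ensemble-average IOWEF of the repeat-accumulate ensemble with repetition factor `q`,
block length `N = qK`: `E(A_{d,w}) = C(K,w)·C(d-1,⌈qw/2⌉-1)·C(N-d,⌊qw/2⌋)/C(N,qw)`. -/
noncomputable def RAEnum (q K d w : ℕ) : ℝ :=
  (K.choose w : ℝ) *
    ((d - 1).choose ((q * w + 1) / 2 - 1) * (q * K - d).choose (q * w / 2) : ℝ) /
    ((q * K).choose (q * w) : ℝ)

open Finset Filter

namespace Nat

theorem factorial_mul_choose_le_pow_of_le {n N : ℕ} (hn : n ≤ N) (k : ℕ) :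
    k ! * n.choose k ≤ N ^ k := by
  rw [← descFactorial_eq_factorial_mul_choose]
  exact (descFactorial_le_pow n k).trans (Nat.pow_le_pow_left hn k)

theorem pow_le_two_pow_mul_factorial_mul_choose {N m : ℕ} (h : 2 * m ≤ N) :
    N ^ m ≤ 2 ^ m * (m ! * N.choose m) := by
  rw [← descFactorial_eq_factorial_mul_choose]
  calc N ^ m ≤ (2 * (N + 1 - m)) ^ m := Nat.pow_le_pow_left (by omega) m
    _ = 2 ^ m * (N + 1 - m) ^ m := Nat.mul_pow _ _ _
    _ ≤ 2 ^ m * N.descFactorial m := Nat.mul_le_mul_left _ (pow_sub_le_descFactorial N m)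

theorem factorial_add_add_one_le (a b : ℕ) : (a + b + 1)! ≤ 4 ^ (a + b + 1) * (a ! * b !) := by
  have hchoose : (a + b).choose b ≤ 2 ^ (a + b + 1) :=
    (choose_le_two_pow _ _).trans (Nat.pow_le_pow_right two_pos (by omega))
  calc (a + b + 1)! = (a + b + 1) * ((a + b).choose b * (a ! * b !)) := by
        rw [factorial_succ, ← add_choose_mul_factorial_mul_factorial a b, mul_assoc]
    _ ≤ 2 ^ (a + b + 1) * (2 ^ (a + b + 1) * (a ! * b !)) :=
        Nat.mul_le_mul Nat.lt_two_pow_self.le (Nat.mul_le_mul_right _ hchoose)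
    _ = 4 ^ (a + b + 1) * (a ! * b !) := by rw [← mul_assoc, ← Nat.mul_pow]

theorem choose_mul_choose_mul_pow_le {c e a b D N : ℕ} (hc : c ≤ D) (he : e ≤ N)
    (hN : 2 * (a + b + 1) ≤ N) :
    c.choose a * e.choose b * N ^ (a + 1) ≤ 8 ^ (a + b + 1) * D ^ a * N.choose (a + b + 1) := by
  set m := a + b + 1
  refine Nat.le_of_mul_le_mul_left ?_ (Nat.mul_pos (factorial_pos a) (factorial_pos b))
  calc a ! * b ! * (c.choose a * e.choose b * N ^ (a + 1))
      = a ! * c.choose a * (b ! * e.choose b) * N ^ (a + 1) := by ring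
    _ ≤ D ^ a * N ^ b * N ^ (a + 1) := by
        gcongr
        exacts [factorial_mul_choose_le_pow_of_le hc a, factorial_mul_choose_le_pow_of_le he b]
    _ = D ^ a * N ^ m := by ring
    _ ≤ D ^ a * (2 ^ m * (m ! * N.choose m)) := by
        gcongr; exact pow_le_two_pow_mul_factorial_mul_choose hN
    _ ≤ D ^ a * (2 ^ m * (4 ^ m * (a ! * b !) * N.choose m)) := by
        gcongr; exact factorial_add_add_one_le a b
    _ = a ! * b ! * (8 ^ m * D ^ a * N.choose m) := by
        rw [show 8 = 2 * 4 from rfl, Nat.mul_pow]; ring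

end Nat

theorem RAEnum_le {q K d w D : ℕ} (hqw : 0 < q * w) (hd : d ≤ D) (hN : 2 * (q * w) ≤ q * K) :
    RAEnum q K d w ≤
      8 ^ (q * w) * K ^ w * D ^ ((q * w + 1) / 2 - 1) / ((q * K : ℕ) : ℝ) ^ ((q * w + 1) / 2) := by
  obtain ⟨a, ha⟩ : ∃ a, (q * w + 1) / 2 = a + 1 := ⟨(q * w + 1) / 2 - 1, by omega⟩
  have hm : q * w = a + q * w / 2 + 1 := by omega
  have hcount := Nat.choose_mul_choose_mul_pow_le (a := a) (b := q * w / 2)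
    (show d - 1 ≤ D by omega) (show q * K - d ≤ q * K by omega) (by omega)
  rw [← hm] at hcount
  have hchoose : 0 < (q * K).choose (q * w) := Nat.choose_pos (by omega)
  have hNpos : (0 : ℝ) < (q * K : ℕ) := by exact_mod_cast (show 0 < q * K by omega)
  rw [RAEnum, div_le_div_iff₀ (by exact_mod_cast hchoose) (by positivity), ha,
    Nat.add_sub_cancel]
  exact_mod_cast calc
    K.choose w * ((d - 1).choose a * (q * K - d).choose (q * w / 2)) * (q * K) ^ (a + 1)
      = K.choose w * ((d - 1).choose a * (q * K - d).choose (q * w / 2) * (q * K) ^ (a + 1)) := by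
        ring
    _ ≤ K ^ w * (8 ^ (q * w) * D ^ a * (q * K).choose (q * w)) :=
        Nat.mul_le_mul (Nat.choose_le_pow K w) hcount
    _ = 8 ^ (q * w) * K ^ w * D ^ a * (q * K).choose (q * w) := by ring

theorem sum_RAEnum_le {q K w D : ℕ} (hqw : 0 < q * w) (hD : 4 * D ≤ q * K) :
    ∑ d ∈ Icc 1 D, RAEnum q K d w ≤
      (8 ^ q * K * ((D : ℝ) / (q * K : ℕ)) ^ ((q : ℝ) / 2)) ^ w := by
  set h := (q * w + 1) / 2
  rcases lt_or_ge D h with hDh | hhD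
  · calc ∑ d ∈ Icc 1 D, RAEnum q K d w = 0 := sum_eq_zero fun d hd => by
          rw [RAEnum, Nat.choose_eq_zero_of_lt (by grind : d - 1 < h - 1)]; simp
      _ ≤ _ := by positivity
  have hN : 2 * (q * w) ≤ q * K := by omega
  have hNpos : (0 : ℝ) < (q * K : ℕ) := by exact_mod_cast (show 0 < q * K by omega)
  set x : ℝ := D / (q * K : ℕ)
  have hx0 : 0 ≤ x := by positivity
  have hx1 : x ≤ 1 := (div_le_one hNpos).2 (by exact_mod_cast (show D ≤ q * K by omega))
  have hexp : (q : ℝ) / 2 * w ≤ (h : ℕ) := by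
    rw [div_mul_eq_mul_div, div_le_iff₀ two_pos]; exact_mod_cast (show q * w ≤ h * 2 by omega)
  calc ∑ d ∈ Icc 1 D, RAEnum q K d w
      ≤ ∑ _d ∈ Icc 1 D, 8 ^ (q * w) * K ^ w * D ^ (h - 1) / ((q * K : ℕ) : ℝ) ^ h :=
        sum_le_sum fun d hd => RAEnum_le hqw (mem_Icc.1 hd).2 hN
    _ = 8 ^ (q * w) * K ^ w * x ^ (h : ℝ) := by
        have hpow : (D : ℝ) * D ^ (h - 1) = D ^ h := by
          rw [← pow_succ', Nat.sub_add_cancel (by omega)]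
        rw [sum_const, Nat.card_Icc, Nat.add_sub_cancel, nsmul_eq_mul, Real.rpow_natCast, div_pow,
          ← hpow]
        ring
    _ ≤ 8 ^ (q * w) * K ^ w * x ^ ((q : ℝ) / 2 * w) :=
        mul_le_mul_of_nonneg_left
          (Real.rpow_le_rpow_of_exponent_ge' hx0 hx1 (by positivity) hexp) (by positivity)
    _ = (8 ^ q * K * x ^ ((q : ℝ) / 2)) ^ w := by
        rw [Real.rpow_mul hx0, Real.rpow_natCast, mul_pow, mul_pow, pow_mul]

theorem Real.div_le_rpow_neg {q ε D N : ℝ} (hq : q ≠ 0) (hN : 0 < N)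
    (hD : D ≤ N ^ ((q - 2) / q - ε)) : D / N ≤ N ^ (-(2 / q + ε)) := by
  rwa [div_le_iff₀ hN, ← Real.rpow_add_one hN.ne',
    show -(2 / q + ε) + 1 = (q - 2) / q - ε by field_simp; ring]

theorem Real.mul_rpow_half_le_rpow_neg {q K ε x : ℝ} (hq : 1 ≤ q) (hK : 0 < K) (hx0 : 0 ≤ x)
    (hx : x ≤ (q * K) ^ (-(2 / q + ε))) : K * x ^ (q / 2) ≤ (q * K) ^ (-(ε * q / 2)) := by
  have hN : 0 < q * K := by positivity
  calc K * x ^ (q / 2) ≤ K * ((q * K) ^ (-(2 / q + ε))) ^ (q / 2) := by gcongr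
    _ = K / (q * K) * (q * K) ^ (-(ε * q / 2)) := by
        rw [← Real.rpow_mul hN.le,
          show -(2 / q + ε) * (q / 2) = -(ε * q / 2) - 1 by field_simp; ring,
          Real.rpow_sub_one hN.ne']
        ring
    _ ≤ 1 * (q * K) ^ (-(ε * q / 2)) := by
        gcongr
        rw [div_le_one hN]
        nlinarith
    _ = (q * K) ^ (-(ε * q / 2)) := one_mul _

theorem eventually_natCast_rpow_neg_le {a c : ℝ} (ha : 0 < a) (hc : 0 < c) :
    ∀ᶠ n : ℕ in atTop, (n : ℝ) ^ (-a) ≤ c :=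
  ((tendsto_rpow_neg_atTop ha).comp tendsto_natCast_atTop_atTop).eventually_le_const hc

theorem sum_Icc_one_half_pow_lt_one (K : ℕ) : ∑ w ∈ Icc 1 K, (1 / 2 : ℝ) ^ w < 1 := by
  suffices ∑ w ∈ Icc 1 K, (1 / 2 : ℝ) ^ w = 1 - (1 / 2) ^ K by
    rw [this]; linarith [pow_pos (one_half_pos : (0 : ℝ) < 1 / 2) K]
  induction K with
  | zero => simp
  | succ n ih => rw [sum_Icc_succ_top (by omega), ih]; ring

/-- For any `ε > 0` there is `N₀` such that for all block lengths `N = qK ≥ N₀`, the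
expected number of codewords of weight at most `N^{(q-2)/q - ε}` is less than `1`. -/
theorem RA_cumulative_WEF_lt_one (q : ℕ) (hq : 3 ≤ q) (ε : ℝ) (hε : 0 < ε) :
    ∃ N₀ : ℕ, ∀ K : ℕ, N₀ ≤ q * K →
      ∑ w ∈ Icc 1 K,
        ∑ d ∈ Icc 1 (⌊((q * K : ℕ) : ℝ) ^ (((q : ℝ) - 2) / (q : ℝ) - ε)⌋₊),
          RAEnum q K d w < 1 := by
  have hq1 : (1 : ℝ) ≤ q := by exact_mod_cast (show 1 ≤ q by omega)
  obtain ⟨N₀, hN₀⟩ := eventually_atTop.1 <|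
    (eventually_natCast_rpow_neg_le (a := 2 / q + ε) (by positivity)
      (by norm_num : (0 : ℝ) < 1 / 4)).and
      ((eventually_natCast_rpow_neg_le (a := ε * q / 2) (by positivity)
        (by positivity : (0 : ℝ) < 1 / (2 * 8 ^ q))).and (eventually_ge_atTop 1))
  refine ⟨N₀, fun K hK => ?_⟩
  obtain ⟨hquarter, hsmall, hN1⟩ := hN₀ _ hK
  set D := ⌊((q * K : ℕ) : ℝ) ^ (((q : ℝ) - 2) / (q : ℝ) - ε)⌋₊
  have hNpos : (0 : ℝ) < (q * K : ℕ) := by exact_mod_cast hN1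
  have hKpos : (0 : ℝ) < K := by exact_mod_cast Nat.pos_of_mul_pos_left hN1
  have hDN : (D : ℝ) / (q * K : ℕ) ≤ ((q * K : ℕ) : ℝ) ^ (-(2 / q + ε)) :=
    Real.div_le_rpow_neg (by positivity) hNpos (Nat.floor_le (by positivity))
  have h4D : 4 * D ≤ q * K := by
    have := (div_le_iff₀ hNpos).1 (hDN.trans hquarter)
    exact_mod_cast (by linarith : (4 * D : ℝ) ≤ (q * K : ℕ))
  have hbase : 8 ^ q * K * ((D : ℝ) / (q * K : ℕ)) ^ ((q : ℝ) / 2) ≤ 1 / 2 := by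
    push_cast at hDN hsmall
    calc 8 ^ q * K * ((D : ℝ) / (q * K : ℕ)) ^ ((q : ℝ) / 2)
        = 8 ^ q * (K * ((D : ℝ) / (q * K : ℕ)) ^ ((q : ℝ) / 2)) := by ring
      _ ≤ 8 ^ q * (1 / (2 * 8 ^ q)) := by
          gcongr
          push_cast
          exact (Real.mul_rpow_half_le_rpow_neg hq1 hKpos (by positivity) hDN).trans hsmall
      _ = 1 / 2 := by field_simp
  calc _ ≤ ∑ w ∈ Icc 1 K, (1 / 2 : ℝ) ^ w := sum_le_sum fun w hw =>
          (sum_RAEnum_le (Nat.mul_pos (by omega) (mem_Icc.1 hw).1) h4D).trans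
            (pow_le_pow_left₀ (by positivity) hbase w)
    _ < 1 := sum_Icc_one_half_pow_lt_one K
end

section
/- Let H(x) = -x·ln x - (1-x)·ln(1-x) be the binary entropy function and fix 0 < ρ < 1/2. Define F_ρ(β) = β·ln 2 + H((ρ - β/2)/(1-β))·(1-β) - H(ρ) for 0 < β ≤ 2ρ. Then F_ρ(β) < 0 for all such β. -/
/-!
With `x = (ρ - β/2)/(1 - β)` we have `ρ = (1 - β)·x + β·½` and `x < ½`, so strict concavity of
the binary entropy, together with `H(½) = ln 2`, gives `(1 - β)·H(x) + β·ln 2 < H(ρ)`.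
-/

/-- The binary entropy function with the natural logarithm
(`Real.log 0 = 0` in Mathlib, so `H 0 = H 1 = 0`). -/
noncomputable def binH (x : ℝ) : ℝ := -x * Real.log x - (1 - x) * Real.log (1 - x)

open Real Set

lemma binH_eq_binEntropy (x : ℝ) : binH x = binEntropy x := by
  simp only [binH, binEntropy, log_inv]
  ring

lemma mul_binEntropy_add_mul_log_two_lt {x β : ℝ} (hx₀ : 0 ≤ x) (hx₁ : x ≤ 1) (hx : x ≠ 2⁻¹)
    (hβ₀ : 0 < β) (hβ₁ : β < 1) :
    (1 - β) * binEntropy x + β * log 2 < binEntropy ((1 - β) * x + β / 2) := by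
  have half_mem : (2 : ℝ)⁻¹ ∈ Icc (0 : ℝ) 1 := by norm_num
  have := strictConcave_binEntropy.2 ⟨hx₀, hx₁⟩ half_mem hx (by linarith) hβ₀ (sub_add_cancel 1 β)
  simpa only [smul_eq_mul, binEntropy_two_inv, div_eq_mul_inv] using this

theorem F_rho_neg_general (ρ β : ℝ) (hρ : ρ < 1 / 2) (hβ0 : 0 < β)
    (hβ : β ≤ 2 * ρ) :
    β * Real.log 2 + binH ((ρ - β / 2) / (1 - β)) * (1 - β) - binH ρ < 0 := by
  have hβ₁ : β < 1 := by linarith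
  have h1β : 0 < 1 - β := by linarith
  set x := (ρ - β / 2) / (1 - β) with hx
  have hρx : (1 - β) * x + β / 2 = ρ := by
    rw [hx, mul_div_cancel₀ _ h1β.ne']
    ring
  have hx₀ : 0 ≤ x := div_nonneg (by linarith) h1β.le
  have hx_lt : x < 2⁻¹ := by
    rw [hx, div_lt_iff₀ h1β]
    linarith
  have key := mul_binEntropy_add_mul_log_two_lt hx₀ (by linarith) hx_lt.ne hβ0 hβ₁
  rw [hρx] at key
  rw [binH_eq_binEntropy, binH_eq_binEntropy]
  linarith

/-- For `0 < ρ < 1/2` and `0 < β ≤ 2ρ`, the function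
`F_ρ(β) = β·ln 2 + H((ρ-β/2)/(1-β))·(1-β) - H(ρ)` is strictly negative. -/
theorem F_rho_neg (ρ β : ℝ) (hρ0 : 0 < ρ) (hρ : ρ < 1 / 2) (hβ0 : 0 < β)
    (hβ : β ≤ 2 * ρ) :
    β * Real.log 2 + binH ((ρ - β / 2) / (1 - β)) * (1 - β) - binH ρ < 0 :=
  F_rho_neg_general ρ β hρ hβ0 hβ
end

section
/- For the RAA ensemble with q = 2 and any 0 < ρ̄: the ensemble-average cumulative weight enumerator satisfies E(A_{d ≤ ρ̄N}) ≥ ∑_{d=1}^{⌊ρ̄N⌋} E(A_{d, d₁=1, w=1}) = ⌊ρ̄N⌋/N, since E(A_{d,1,1}) = 1/N for every 1 ≤ d ≤ N. In particular the cumulative enumerator does not vanish as N → ∞. -/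
/-- Ensemble-average IOWEF of the RAA ensemble with `q = 2`, block length `N = 2K`:
`E(A_{d,d₁,w}) = C(K,w) · [C(d₁-1,w-1)·C(N-d₁,w)/C(N,2w)] · [C(d-1,⌈d₁/2⌉-1)·C(N-d,⌊d₁/2⌋)/C(N,d₁)]`. -/
noncomputable def RAAEnum2 (K d d₁ w : ℕ) : ℝ :=
  (K.choose w : ℝ) *
    (((d₁ - 1).choose (w - 1) * (2 * K - d₁).choose w : ℝ) / ((2 * K).choose (2 * w) : ℝ)) *
    (((d - 1).choose ((d₁ + 1) / 2 - 1) * (2 * K - d).choose (d₁ / 2) : ℝ) /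
      ((2 * K).choose d₁ : ℝ))

/-! All terms of the enumerator are nonnegative, and the terms with `w = d₁ = 1` equal
`K · (N - 1) / C(N, 2) · 1 / N = 1 / N`; so these `⌊ρ̄N⌋` terms alone already sum to `⌊ρ̄N⌋ / N`. -/

open Finset

theorem Nat.choose_two_two_mul (K : ℕ) : (2 * K).choose 2 = K * (2 * K - 1) := by
  rw [Nat.choose_two_right, Nat.mul_assoc, Nat.mul_div_cancel_left _ two_pos]

lemma RAAEnum2_nonneg (K d d₁ w : ℕ) : 0 ≤ RAAEnum2 K d d₁ w := by
  unfold RAAEnum2; positivity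

lemma RAAEnum2_one_one (K d : ℕ) : RAAEnum2 K d 1 1 = 1 / (2 * K : ℝ) := by
  rcases Nat.eq_zero_or_pos K with rfl | hK
  · simp [RAAEnum2]
  have h : ((2 * K - 1 : ℕ) : ℝ) ≠ 0 := by exact_mod_cast (by omega : 2 * K - 1 ≠ 0)
  simp [RAAEnum2, Nat.choose_two_two_mul]
  field_simp

lemma sum_Icc_RAAEnum2_one_one (K M : ℕ) :
    ∑ d ∈ Icc 1 M, RAAEnum2 K d 1 1 = (M : ℝ) / (2 * K : ℝ) := by
  simp [RAAEnum2_one_one, div_eq_mul_one_div (M : ℝ)]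

open Finset in
theorem RAA_q2_cumulative_lower_bound_general (K : ℕ) (hK : 1 ≤ K) (rbar : ℝ) :
    (∀ d ∈ Icc 1 (2 * K), RAAEnum2 K d 1 1 = 1 / (2 * K : ℝ)) ∧
    (⌊rbar * (2 * K : ℝ)⌋₊ : ℝ) / (2 * K : ℝ) ≤
      ∑ w ∈ Icc 1 K, ∑ d₁ ∈ Icc 1 (2 * K), ∑ d ∈ Icc 1 ⌊rbar * (2 * K : ℝ)⌋₊,
        RAAEnum2 K d d₁ w := by
  refine ⟨fun d _ => RAAEnum2_one_one K d, ?_⟩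
  set M := ⌊rbar * (2 * K : ℝ)⌋₊
  calc (M : ℝ) / (2 * K : ℝ) = ∑ d ∈ Icc 1 M, RAAEnum2 K d 1 1 :=
        (sum_Icc_RAAEnum2_one_one K M).symm
    _ ≤ ∑ d₁ ∈ Icc 1 (2 * K), ∑ d ∈ Icc 1 M, RAAEnum2 K d d₁ 1 :=
        single_le_sum (f := fun d₁ => ∑ d ∈ Icc 1 M, RAAEnum2 K d d₁ 1)
          (fun _ _ => sum_nonneg fun _ _ => RAAEnum2_nonneg ..) (by simp; omega)
    _ ≤ ∑ w ∈ Icc 1 K, ∑ d₁ ∈ Icc 1 (2 * K), ∑ d ∈ Icc 1 M, RAAEnum2 K d d₁ w :=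
        single_le_sum (f := fun w => ∑ d₁ ∈ Icc 1 (2 * K), ∑ d ∈ Icc 1 M, RAAEnum2 K d d₁ w)
          (fun _ _ => sum_nonneg fun _ _ => sum_nonneg fun _ _ => RAAEnum2_nonneg ..)
          (by simp [hK])

open Finset in
/-- For the RAA ensemble with `q = 2`: `E(A_{d,1,1}) = 1/N` for every `1 ≤ d ≤ N`,
hence for any `rbar > 0` the cumulative weight enumerator satisfies
`E(A_{d ≤ rbarN}) ≥ ∑_{d=1}^{⌊rbarN⌋} E(A_{d,1,1}) = ⌊rbarN⌋/N`. -/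
theorem RAA_q2_cumulative_lower_bound (K : ℕ) (hK : 1 ≤ K) (rbar : ℝ) (hrbar : 0 < rbar) :
    (∀ d ∈ Icc 1 (2 * K), RAAEnum2 K d 1 1 = 1 / (2 * K : ℝ)) ∧
    (⌊rbar * (2 * K : ℝ)⌋₊ : ℝ) / (2 * K : ℝ) ≤
      ∑ w ∈ Icc 1 K, ∑ d₁ ∈ Icc 1 (2 * K), ∑ d ∈ Icc 1 ⌊rbar * (2 * K : ℝ)⌋₊,
        RAAEnum2 K d d₁ w :=
  RAA_q2_cumulative_lower_bound_general K hK rbar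
end
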